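/- arXiv:2308.06837 — 7 statements merged into one kernel-verified Lean document; each statement's English description precedes it below -/
import Mathlib

section
/- (Function lemma) For any positive integers k and n and any prime p, there exist a finite set S and a subgroup F of the additive group of functions S → ℤ/p^kℤ such that: (1) each function in F vanishes at some point of S; (2) for any s₁, …, sₙ ∈ S there exists f ∈ F with f(s₁) = … = f(sₙ) = 1. -/
/-!
Call `F` good for `n` if every `f ∈ F` vanishes somewhere and any `n` points carry a common
`f ∈ F` equal to `1`. From a good `F` on `S` and a family `H` on `Y` that vanishes somewhere and
takes every value at every point, the functions `(x, y) ↦ a x + b x y` with `a ∈ F` and each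
`b x ∈ H` form a family on `S × Y` good for `n + 1`: a zero is found by first killing `a`, then
`b x`; for interpolation, `b` is supported at the first coordinate of the new point and corrects
the value there. For `H` one takes the linear forms `a y₀ + b y₁` on the two affine charts of
the projective line over `ℤ/p^kℤ`; they have zeros because divisibility in `ℤ/p^kℤ` is total.
-/

namespace FunctionLemma

section Extension

variable {R : Type*} [AddCommGroup R] {S Y : Type*}

def AllHaveZero (F : AddSubgroup (S → R)) : Prop :=
  ∀ f ∈ F, ∃ s, f s = 0

def Interpolates (F : AddSubgroup (S → R)) (n : ℕ) (e : R) : Prop :=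
  ∀ s : Fin n → S, ∃ f ∈ F, ∀ i, f (s i) = e

def extendBy (F : AddSubgroup (S → R)) (H : AddSubgroup (Y → R)) : AddSubgroup (S × Y → R) where
  carrier := {f | ∃ a ∈ F, ∃ b : S → Y → R, (∀ x, b x ∈ H) ∧ f = fun w => a w.1 + b w.1 w.2}
  zero_mem' := ⟨0, F.zero_mem, 0, fun _ => H.zero_mem, by funext; simp⟩
  add_mem' := by
    rintro _ _ ⟨a, ha, b, hb, rfl⟩ ⟨a', ha', b', hb', rfl⟩
    exact ⟨a + a', F.add_mem ha ha', b + b', fun x => H.add_mem (hb x) (hb' x),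
      by funext; simp only [Pi.add_apply]; abel⟩
  neg_mem' := by
    rintro _ ⟨a, ha, b, hb, rfl⟩
    exact ⟨-a, F.neg_mem ha, -b, fun x => H.neg_mem (hb x),
      by funext; simp only [Pi.neg_apply]; abel⟩

variable {F : AddSubgroup (S → R)} {H : AddSubgroup (Y → R)}

theorem AllHaveZero.extendBy (hF : AllHaveZero F) (hH : AllHaveZero H) :
    AllHaveZero (extendBy F H) := by
  rintro _ ⟨a, ha, b, hb, rfl⟩
  obtain ⟨x, hx⟩ := hF a ha
  obtain ⟨y, hy⟩ := hH (b x) (hb x)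
  exact ⟨(x, y), by simp [hx, hy]⟩

theorem Interpolates.extendBy {n : ℕ} {e : R} (hF : Interpolates F n e)
    (hH : ∀ y c, ∃ h ∈ H, h y = c) : Interpolates (extendBy F H) (n + 1) e := by
  classical
  intro z
  set w := z (Fin.last n)
  obtain ⟨a, ha, ha_eq⟩ := hF fun i => (z i.castSucc).1
  obtain ⟨b, hbH, hb_last, hb_zero⟩ : ∃ b : S → Y → R,
      (∀ x, b x ∈ H) ∧ b w.1 w.2 = e - a w.1 ∧ ∀ x, a x = e → b x = 0 := by
    by_cases hw : a w.1 = e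
    · exact ⟨0, fun _ => H.zero_mem, by simp [hw], fun _ _ => rfl⟩
    obtain ⟨h, hh, hh_eq⟩ := hH w.2 (e - a w.1)
    refine ⟨Pi.single w.1 h, fun x => ?_, by simp [hh_eq], fun x hx => ?_⟩
    · by_cases hxw : x = w.1 <;> simp [hxw, hh]
    · exact Pi.single_eq_of_ne (fun hxw : x = w.1 => hw (hxw ▸ hx)) _
  refine ⟨fun v => a v.1 + b v.1 v.2, ⟨a, ha, b, hbH, rfl⟩, fun i => ?_⟩
  induction i using Fin.lastCases with
  | last =>
    show a w.1 + b w.1 w.2 = e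
    rw [hb_last, add_sub_cancel]
  | cast i => simp only [hb_zero _ (ha_eq i), ha_eq i, Pi.zero_apply, add_zero]

theorem exists_allHaveZero_interpolates {Y : Type} [Fintype Y] {H : AddSubgroup (Y → R)}
    (hH₀ : AllHaveZero H) (hH : ∀ y c, ∃ h ∈ H, h y = c) (e : R) :
    ∀ n : ℕ, ∃ (S : Type) (_ : Fintype S) (F : AddSubgroup (S → R)),
      AllHaveZero F ∧ Interpolates F n e
  | 0 => ⟨Unit, inferInstance, ⊥, fun f hf => ⟨(), by rw [AddSubgroup.mem_bot.1 hf]; rfl⟩,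
      fun _ => ⟨0, zero_mem _, fun i => i.elim0⟩⟩
  | n + 1 =>
    let ⟨S, _, F, hF₀, hF⟩ := exists_allHaveZero_interpolates hH₀ hH e n
    ⟨S × Y, inferInstance, extendBy F H, hF₀.extendBy hH₀, hF.extendBy hH⟩

end Extension

section ProjectiveLine

variable (R : Type*) [CommRing R]

/-- The linear form `a y₀ + b y₁` restricted to the points `(1, t)` (left summand) and
`(t, 1)` (right summand) of the projective line. -/
def chartForms : AddSubgroup (R ⊕ R → R) :=
  AddMonoidHom.range <| AddMonoidHom.mk' (fun ab : R × R =>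
    Sum.elim (fun t => ab.1 + ab.2 * t) (fun t => ab.1 * t + ab.2))
    (fun _ _ => by funext y; cases y <;> simp only [Sum.elim_inl, Sum.elim_inr, Prod.fst_add,
      Prod.snd_add, Pi.add_apply] <;> ring)

variable {R}

theorem allHaveZero_chartForms [PreValuationRing R] : AllHaveZero (chartForms R) := by
  rintro _ ⟨⟨a, b⟩, rfl⟩
  obtain ⟨c, rfl | rfl⟩ := PreValuationRing.cond a b
  · exact ⟨Sum.inr (-c), by simp⟩
  · exact ⟨Sum.inl (-c), by simp⟩

theorem exists_mem_chartForms_apply_eq (y : R ⊕ R) (c : R) : ∃ h ∈ chartForms R, h y = c := by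
  cases y with
  | inl t => exact ⟨_, ⟨(c, 0), rfl⟩, by simp⟩
  | inr t => exact ⟨_, ⟨(0, c), rfl⟩, by simp⟩

end ProjectiveLine

instance preValuationRing_zmod_prime_pow (p k : ℕ) [Fact p.Prime] :
    PreValuationRing (ZMod (p ^ k)) :=
  Function.Surjective.preValuationRing (PadicInt.toZModPow (p := p) k).toMonoidHom.toMulHom
    (ZMod.ringHom_surjective _)

end FunctionLemma

open FunctionLemma in
theorem function_lemma_general (p : ℕ) (hp : p.Prime) (k n : ℕ) :
    ∃ (S : Type) (_ : Fintype S) (F : AddSubgroup (S → ZMod (p ^ k))),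
      (∀ f ∈ F, ∃ s : S, f s = 0) ∧
      (∀ s : Fin n → S, ∃ f ∈ F, ∀ i : Fin n, f (s i) = 1) := by
  have := Fact.mk hp
  exact exists_allHaveZero_interpolates allHaveZero_chartForms
    exists_mem_chartForms_apply_eq 1 n

/-- Function lemma: for any positive integers `k`, `n` and prime `p`, there exist a finite set
`S` and a subgroup `F` of the additive group of functions `S → ℤ/p^kℤ` such that every `f ∈ F`
vanishes at some point of `S`, but for any `s₁, …, sₙ ∈ S` there is `f ∈ F` taking value `1`
at all of them. -/
theorem function_lemma (p : ℕ) (hp : p.Prime) (k n : ℕ) (hk : 1 ≤ k) (hn : 1 ≤ n) :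
    ∃ (S : Type) (_ : Fintype S) (F : AddSubgroup (S → ZMod (p ^ k))),
      (∀ f ∈ F, ∃ s : S, f s = 0) ∧
      (∀ s : Fin n → S, ∃ f ∈ F, ∀ i : Fin n, f (s i) = 1) :=
  function_lemma_general p hp k n
end

section
/- Let p be prime, k, n, m positive integers with m > n(p−1)p^{k−1}(p^k − 1). Let S = ℤ_{p^k}^m \ p·ℤ_{p^k}^m and let F be the set of functions S → ℤ_{p^k} given by polynomials in m variables over ℤ_{p^k} with zero constant term and total degree at most n(p−1)p^{k−1}. Then every f ∈ F vanishes at some point of S. -/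
/-!
Evaluating `f` at the indicator vector of `S` gives `c S` modulo `p ^ k`, where `c S` counts the
monomials of `f` supported in `S`, each repeated as often as its coefficient lifted to `ℕ`.
By Lucas, `c.choose (p ^ j) ≡ c / p ^ j [MOD p]`, hence `∏ j < k, (1 - c.choose (p ^ j) ^ (p - 1))`
is, in `ZMod p`, the indicator of `p ^ k ∣ c`. As a function of `S` it has degree at most
`deg f * (p ^ k - 1)` on the Boolean cube, since `c.choose r` counts the `r`-families of monomials
whose supports all lie in `S`. A function of degree `< card ι` has vanishing alternating sum over
the cube; as this one is `1` at `∅`, it is nonzero at some nonempty `S`, a root of `f`.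
-/

open Finset

namespace SetFunction

variable {R ι : Type*} [CommRing R] [DecidableEq ι]

variable (R) in
def supIndicator (T : Finset ι) : Finset ι → R := fun S => if T ⊆ S then 1 else 0

variable (R ι) in
/-- Functions on `Finset ι` are functions on the cube `{0, 1} ^ ι`; those of degree at most `D`
are the combinations of the monomials `∏ i ∈ T, x i` with `#T ≤ D`. -/
def degreeLE (D : ℕ) : Submodule R (Finset ι → R) :=
  Submodule.span R (supIndicator R '' {T | #T ≤ D})

theorem supIndicator_mem_degreeLE {T : Finset ι} {D : ℕ} (h : #T ≤ D) :
    supIndicator R T ∈ degreeLE R ι D :=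
  Submodule.subset_span ⟨T, h, rfl⟩

theorem degreeLE_mono {D E : ℕ} (h : D ≤ E) : degreeLE R ι D ≤ degreeLE R ι E :=
  Submodule.span_mono (Set.image_mono fun _ hT => le_trans hT h)

theorem supIndicator_empty : supIndicator R (∅ : Finset ι) = 1 := by
  ext; simp [supIndicator]

theorem one_mem_degreeLE (D : ℕ) : (1 : Finset ι → R) ∈ degreeLE R ι D :=
  supIndicator_empty (R := R) (ι := ι) ▸ supIndicator_mem_degreeLE (Nat.zero_le D)

theorem supIndicator_mul (T U : Finset ι) :
    supIndicator R T * supIndicator R U = supIndicator R (T ∪ U) := by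
  ext S
  by_cases hT : T ⊆ S <;> by_cases hU : U ⊆ S <;> simp [supIndicator, union_subset_iff, hT, hU]

theorem degreeLE_mul_le (D E : ℕ) :
    degreeLE R ι D * degreeLE R ι E ≤ degreeLE R ι (D + E) := by
  rw [degreeLE, degreeLE, Submodule.span_mul_span, Submodule.span_le]
  rintro _ ⟨_, ⟨T, hT, rfl⟩, _, ⟨U, hU, rfl⟩, rfl⟩
  show supIndicator R T * supIndicator R U ∈ degreeLE R ι (D + E)
  rw [supIndicator_mul]
  exact supIndicator_mem_degreeLE ((card_union_le T U).trans (add_le_add hT hU))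

theorem mul_mem_degreeLE {D E : ℕ} {g h : Finset ι → R} (hg : g ∈ degreeLE R ι D)
    (hh : h ∈ degreeLE R ι E) : g * h ∈ degreeLE R ι (D + E) :=
  degreeLE_mul_le D E (Submodule.mul_mem_mul hg hh)

theorem prod_mem_degreeLE {κ : Type*} (J : Finset κ) (g : κ → Finset ι → R) (D : κ → ℕ)
    (h : ∀ j ∈ J, g j ∈ degreeLE R ι (D j)) :
    ∏ j ∈ J, g j ∈ degreeLE R ι (∑ j ∈ J, D j) := by
  classical
  induction J using Finset.induction_on with
  | empty =>
    rw [prod_empty, sum_empty]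
    exact one_mem_degreeLE 0
  | insert j J hj ih =>
    rw [prod_insert hj, sum_insert hj]
    exact mul_mem_degreeLE (h j (mem_insert_self j J))
      (ih fun i hi => h i (mem_insert_of_mem hi))

theorem pow_mem_degreeLE {D : ℕ} {g : Finset ι → R} (hg : g ∈ degreeLE R ι D) (r : ℕ) :
    g ^ r ∈ degreeLE R ι (D * r) := by
  simpa [mul_comm D] using prod_mem_degreeLE (range r) (fun _ => g) (fun _ => D) fun _ _ => hg

theorem choose_card_filter_subset_mem_degreeLE {κ : Type*} (I : Finset κ) (t : κ → Finset ι)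
    {D : ℕ} (ht : ∀ i ∈ I, #(t i) ≤ D) (r : ℕ) :
    (fun S => ((#{i ∈ I | t i ⊆ S}).choose r : R)) ∈ degreeLE R ι (D * r) := by
  classical
  have hcount : (fun S => ((#{i ∈ I | t i ⊆ S}).choose r : R)) =
      ∑ J ∈ I.powersetCard r, supIndicator R (J.biUnion t) := by
    ext S
    rw [← card_powersetCard, Finset.sum_apply]
    simp only [supIndicator, biUnion_subset, sum_boole]
    congr 2
    ext J
    simp only [mem_powersetCard, mem_filter]
    grind
  rw [hcount]
  refine Submodule.sum_mem _ fun J hJ => supIndicator_mem_degreeLE ?_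
  obtain ⟨hJI, rfl⟩ := mem_powersetCard.mp hJ
  calc #(J.biUnion t) ≤ ∑ i ∈ J, #(t i) := card_biUnion_le
    _ ≤ ∑ _ ∈ J, D := sum_le_sum fun i hi => ht i (hJI hi)
    _ = D * #J := by rw [sum_const, smul_eq_mul, mul_comm]

theorem sum_neg_one_pow_card_mul_supIndicator [Fintype ι] {T : Finset ι} (hT : T ≠ univ) :
    ∑ S : Finset ι, (-1 : R) ^ #S * supIndicator R T S = 0 := by
  obtain ⟨i, -, hi⟩ := exists_of_ssubset (ssubset_univ_iff.mpr hT)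
  rw [← powerset_univ, ← insert_erase (mem_univ i), sum_powerset_insert (notMem_erase i _),
    ← sum_add_distrib]
  refine sum_eq_zero fun S hS => ?_
  have hiS : i ∉ S := fun h => notMem_erase i univ (mem_powerset.mp hS h)
  simp only [supIndicator, card_insert_of_notMem hiS, subset_insert_iff_of_notMem hi, pow_succ]
  split_ifs <;> ring

theorem sum_neg_one_pow_card_mul_eq_zero [Fintype ι] {D : ℕ} {h : Finset ι → R}
    (hh : h ∈ degreeLE R ι D) (hD : D < Fintype.card ι) :
    ∑ S : Finset ι, (-1 : R) ^ #S * h S = 0 := by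
  induction hh using Submodule.span_induction with
  | mem g hg =>
    obtain ⟨T, hT, rfl⟩ := hg
    refine sum_neg_one_pow_card_mul_supIndicator fun hT' => ?_
    have : #T ≤ D := hT
    rw [hT', card_univ] at this
    omega
  | zero => simp
  | add g g' _ _ hg hg' => simp [mul_add, sum_add_distrib, hg, hg']
  | smul c g _ hg => simp [mul_left_comm _ c, ← mul_sum, hg]

theorem exists_nonempty_apply_ne_zero [Fintype ι] {D : ℕ} {h : Finset ι → R}
    (hh : h ∈ degreeLE R ι D) (hD : D < Fintype.card ι) (h0 : h ∅ ≠ 0) :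
    ∃ S : Finset ι, S.Nonempty ∧ h S ≠ 0 := by
  by_contra! hS
  refine h0 ?_
  rw [← sum_neg_one_pow_card_mul_eq_zero hh hD, sum_eq_single ∅ (fun S _ hS' => ?_) (by simp)]
  · simp
  · rw [hS S (nonempty_iff_ne_empty.mpr hS'), mul_zero]

end SetFunction

theorem Nat.choose_prime_pow_modEq_div (p : ℕ) [Fact p.Prime] (j a : ℕ) :
    a.choose (p ^ j) ≡ a / p ^ j [MOD p] := by
  induction j generalizing a with
  | zero => simp [Nat.ModEq.refl]
  | succ j ih =>
    have hp := (Fact.out : p.Prime).pos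
    have lucas := Choose.choose_modEq_choose_mod_mul_choose_div_nat (p := p) (n := a)
      (k := p ^ (j + 1))
    rw [pow_succ, Nat.mul_mod_left, Nat.mul_div_cancel _ hp, Nat.choose_zero_right,
      one_mul] at lucas
    rw [show a / p ^ (j + 1) = a / p / p ^ j by rw [pow_succ', Nat.div_div_eq_div_mul]]
    exact lucas.trans (ih (a / p))

theorem Nat.pow_dvd_of_forall_dvd_div_pow {p a k : ℕ} (h : ∀ j < k, p ∣ a / p ^ j) :
    p ^ k ∣ a := by
  induction k with
  | zero => exact one_dvd a
  | succ k ih =>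
    have hk := ih fun j hj => h j (by omega)
    exact pow_succ p k ▸ (Nat.dvd_div_iff_mul_dvd hk).mp (h k k.lt_succ_self)

theorem ZMod.prod_one_sub_choose_pow_eq_zero {p : ℕ} [Fact p.Prime] {a k : ℕ}
    (ha : ¬ p ^ k ∣ a) :
    ∏ j ∈ range k, (1 - ((a.choose (p ^ j) : ℕ) : ZMod p) ^ (p - 1)) = 0 := by
  obtain ⟨j, hj, hdigit⟩ : ∃ j < k, ¬ p ∣ a / p ^ j := by
    by_contra! h
    exact ha (Nat.pow_dvd_of_forall_dvd_div_pow h)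
  refine prod_eq_zero (mem_range.mpr hj) ?_
  rw [(ZMod.natCast_eq_natCast_iff _ _ _).mpr (Nat.choose_prime_pow_modEq_div p j a),
    ZMod.pow_card_sub_one_eq_one (by rwa [Ne, ZMod.natCast_eq_zero_iff]), sub_self]

theorem Nat.sum_range_pow_mul_sub_one (p k : ℕ) (hp : 1 ≤ p) :
    ∑ j ∈ range k, p ^ j * (p - 1) = p ^ k - 1 := by
  have := geom_sum_mul_add (p - 1) k
  rw [Nat.sub_add_cancel hp, sum_mul] at this
  omega

namespace MvPolynomial

variable {ι R : Type*}

theorem card_support_le_totalDegree [CommSemiring R] {f : MvPolynomial ι R} {d : ι →₀ ℕ}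
    (hd : d ∈ f.support) : #d.support ≤ f.totalDegree :=
  calc #d.support = ∑ _ ∈ d.support, 1 := card_eq_sum_ones _
    _ ≤ d.sum fun _ e => e :=
      sum_le_sum fun _ hi => Nat.one_le_iff_ne_zero.mpr (Finsupp.mem_support_iff.mp hi)
    _ ≤ f.totalDegree := le_totalDegree hd

theorem eval_indicator [CommSemiring R] [DecidableEq ι] (f : MvPolynomial ι R) (S : Finset ι) :
    eval (fun i => if i ∈ S then 1 else 0) f =
      ∑ d ∈ f.support with d.support ⊆ S, f.coeff d := by
  rw [eval_eq, sum_filter]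
  refine sum_congr rfl fun d _ => ?_
  rw [prod_congr rfl fun _ hi => by
      rw [ite_pow, one_pow, zero_pow (Finsupp.mem_support_iff.mp hi)],
    prod_boole, mul_boole]
  exact if_congr subset_iff.symm rfl rfl

theorem eval_indicator_eq_card {n : ℕ} [NeZero n] [DecidableEq ι] (f : MvPolynomial ι (ZMod n))
    (S : Finset ι) :
    eval (fun i => if i ∈ S then 1 else 0) f =
      #{x ∈ f.support.sigma fun d => range (f.coeff d).val | x.1.support ⊆ S} := by
  rw [eval_indicator, sum_filter, card_filter, Nat.cast_sum, sum_sigma]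
  refine sum_congr rfl fun d _ => ?_
  split_ifs <;> simp

end MvPolynomial

open SetFunction in
theorem MvPolynomial.exists_nonempty_eval_indicator_eq_zero {ι : Type*} [Fintype ι]
    [DecidableEq ι] {p k : ℕ} [Fact p.Prime] (f : MvPolynomial ι (ZMod (p ^ k)))
    (hconst : f.coeff 0 = 0) (hdeg : f.totalDegree * (p ^ k - 1) < Fintype.card ι) :
    ∃ S : Finset ι, S.Nonempty ∧ eval (fun i => if i ∈ S then 1 else 0) f = 0 := by
  have hp := (Fact.out : p.Prime)
  set I := f.support.sigma fun d => range (f.coeff d).val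
  set c : Finset ι → ℕ := fun S => #{x ∈ I | x.1.support ⊆ S}
  have hI : ∀ x ∈ I, #x.1.support ≤ f.totalDegree := fun x hx =>
    card_support_le_totalDegree (mem_sigma.mp hx).1
  have hc : c ∅ = 0 := by
    refine card_eq_zero.mpr (filter_eq_empty_iff.mpr fun x hx hsub => ?_)
    have hx0 : x.1 = 0 := Finsupp.support_eq_empty.mp (subset_empty.mp hsub)
    exact mem_support_iff.mp (hx0 ▸ (mem_sigma.mp hx).1) hconst
  set h : Finset ι → ZMod p :=
    ∏ j ∈ range k, (1 - (fun S => ((c S).choose (p ^ j) : ZMod p)) ^ (p - 1))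
  have hh : h ∈ degreeLE (ZMod p) ι (f.totalDegree * (p ^ k - 1)) := by
    refine degreeLE_mono (le_of_eq ?_) (prod_mem_degreeLE _ _
      (fun j => f.totalDegree * p ^ j * (p - 1)) fun j _ => Submodule.sub_mem _ (one_mem_degreeLE _)
      (pow_mem_degreeLE (choose_card_filter_subset_mem_degreeLE I _ hI _) _))
    simp_rw [mul_assoc, ← mul_sum, Nat.sum_range_pow_mul_sub_one p k hp.one_le]
  have h0 : h ∅ = 1 := by
    have hp1 : p - 1 ≠ 0 := by have := hp.two_le; omega
    simp [h, hc, Nat.choose_eq_zero_of_lt (pow_pos hp.pos _), zero_pow hp1]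
  obtain ⟨S, hS, hhS⟩ := exists_nonempty_apply_ne_zero hh hdeg (h0 ▸ one_ne_zero)
  refine ⟨S, hS, ?_⟩
  rw [eval_indicator_eq_card, ZMod.natCast_eq_zero_iff]
  by_contra hdvd
  exact hhS (by simpa [h] using ZMod.prod_one_sub_choose_pow_eq_zero hdvd)

theorem polynomials_vanish_on_S_general (p : ℕ) (hp : p.Prime) (k n m : ℕ)
    (hk : 1 ≤ k)
    (hm : m > n * (p - 1) * p ^ (k - 1) * (p ^ k - 1))
    (f : MvPolynomial (Fin m) (ZMod (p ^ k)))
    (hconst : f.coeff 0 = 0)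
    (hdeg : f.totalDegree ≤ n * (p - 1) * p ^ (k - 1)) :
    ∃ v : Fin m → ZMod (p ^ k),
      (∃ i : Fin m, ¬ (p : ZMod (p ^ k)) ∣ v i) ∧ MvPolynomial.eval v f = 0 := by
  have := Fact.mk hp
  obtain ⟨S, ⟨i, hi⟩, hroot⟩ := MvPolynomial.exists_nonempty_eval_indicator_eq_zero f hconst
    (by rw [Fintype.card_fin]; exact (Nat.mul_le_mul_right _ hdeg).trans_lt hm)
  refine ⟨_, ⟨i, ?_⟩, hroot⟩
  rw [if_pos hi, ← isUnit_iff_dvd_one]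
  exact ZMod.prime_natCast_not_isUnit_pow hp hk

/-- With `S = ℤ_{p^k}^m \ p·ℤ_{p^k}^m` and `m > n(p-1)p^{k-1}(p^k - 1)`, every polynomial in
`m` variables over `ℤ/p^kℤ` with zero constant term and total degree at most `n(p-1)p^{k-1}`
vanishes at some point of `S`. -/
theorem polynomials_vanish_on_S (p : ℕ) (hp : p.Prime) (k n m : ℕ)
    (hk : 1 ≤ k) (hn : 1 ≤ n)
    (hm : m > n * (p - 1) * p ^ (k - 1) * (p ^ k - 1))
    (f : MvPolynomial (Fin m) (ZMod (p ^ k)))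
    (hconst : f.coeff 0 = 0)
    (hdeg : f.totalDegree ≤ n * (p - 1) * p ^ (k - 1)) :
    ∃ v : Fin m → ZMod (p ^ k),
      (∃ i : Fin m, ¬ (p : ZMod (p ^ k)) ∣ v i) ∧ MvPolynomial.eval v f = 0 :=
  polynomials_vanish_on_S_general p hp k n m hk hm f hconst hdeg
end

section
/- (Schanuel) Let p be prime, k ≥ 1, and f ∈ (ℤ/p^kℤ)[x₁,…,x_m] a polynomial with zero constant term. If m > (p^k − 1)·deg f, then f has a root in {0,1}^m different from the zero vector. -/
/-!
For `T ⊆ Fin m`, evaluating `f` at the indicator vector of `T` gives the residue of the natural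
number `N(T) = ∑ (f.coeff s).val`, summed over the monomials `s` of `f` supported in `T`. By Lucas'
theorem `p ^ k ∣ N` as soon as `p ∣ N.choose (p ^ j)` for all `j < k`. Over `𝔽_p`, the condition
`supp s ⊆ supp y` is detected by the polynomial `∏_{i ∈ supp s} y_i ^ (p - 1)` of degree at most
`(p - 1) deg f`, so `N(supp y).choose (p ^ j) mod p` is the `p ^ j`-th elementary symmetric
polynomial in these indicators, each repeated `(f.coeff s).val` times. These `k` polynomials have
total degree `∑_{j<k} p ^ j (p - 1) deg f = (p ^ k - 1) deg f < m` and vanish at `0` (no constant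
term), so by Chevalley–Warning they have a common nonzero zero `y`; take `T = supp y`.
-/

open Finset MvPolynomial

theorem Nat.pow_dvd_of_forall_dvd_choose_pow {p : ℕ} (hp : p.Prime) :
    ∀ {k n : ℕ}, (∀ j < k, p ∣ n.choose (p ^ j)) → p ^ k ∣ n
  | 0, _, _ => by simp
  | k + 1, n, h => by
    have := Fact.mk hp
    have hn : p ∣ n := by simpa using h 0 k.succ_pos
    have hdiv : p ^ k ∣ n / p := Nat.pow_dvd_of_forall_dvd_choose_pow hp fun j hj => by
      -- Lucas: `n.choose (p ^ (j + 1)) ≡ (n / p).choose (p ^ j) [MOD p]`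
      have lucas :=
        Choose.choose_modEq_choose_mod_mul_choose_div_nat (n := n) (k := p ^ (j + 1)) (p := p)
      rw [pow_succ, Nat.mul_mod_left, Nat.mul_div_cancel _ hp.pos, Nat.choose_zero_right,
        one_mul] at lucas
      have hdvd := h (j + 1) (by omega)
      rw [pow_succ] at hdvd
      exact Nat.modEq_zero_iff_dvd.1 (lucas.symm.trans (Nat.modEq_zero_iff_dvd.2 hdvd))
    rw [← Nat.mul_div_cancel' hn, pow_succ']
    exact Nat.mul_dvd_mul_left p hdiv

theorem Nat.geom_sum_mul_sub_one (p k : ℕ) : (∑ j ∈ range k, p ^ j) * (p - 1) = p ^ k - 1 := by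
  rcases p with _ | q
  · rcases k with _ | k <;> simp
  · have := geom_sum_mul_add q k
    simp only [Nat.add_sub_cancel] at this ⊢
    omega

theorem Finset.sum_powersetCard_prod_boole {ι R : Type*} [CommSemiring R] (s : Finset ι)
    (P : ι → Prop) [DecidablePred P] (r : ℕ) :
    ∑ A ∈ s.powersetCard r, ∏ a ∈ A, (if P a then 1 else 0 : R) = (#(s.filter P)).choose r := by
  classical
  simp_rw [prod_boole, sum_boole, ← card_powersetCard]
  congr 2
  ext A
  simp only [mem_filter, mem_powersetCard, subset_iff]
  grind

namespace MvPolynomial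

variable {σ R : Type*} [CommSemiring R]

theorem card_support_le_totalDegree_s7 {f : MvPolynomial σ R} {s : σ →₀ ℕ} (hs : s ∈ f.support) :
    #s.support ≤ f.totalDegree :=
  calc #s.support = ∑ _i ∈ s.support, 1 := card_eq_sum_ones _
    _ ≤ ∑ i ∈ s.support, s i := sum_le_sum fun i hi => Nat.one_le_iff_ne_zero.2 (by simpa using hi)
    _ ≤ f.totalDegree := le_totalDegree hs

theorem totalDegree_prod_X_pow_le (S : Finset σ) (n : ℕ) :
    (∏ i ∈ S, X i ^ n : MvPolynomial σ R).totalDegree ≤ #S * n :=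
  calc _ ≤ ∑ i ∈ S, (X i ^ n : MvPolynomial σ R).totalDegree := totalDegree_finsetProd _ _
    _ ≤ ∑ _i ∈ S, n := sum_le_sum fun i _ => by
        simpa [X_pow_eq_monomial] using totalDegree_monomial_le (Finsupp.single i n) (1 : R)
    _ = #S * n := by rw [sum_const, smul_eq_mul]

theorem totalDegree_sum_powersetCard_prod_le {ι : Type*} {s : Finset ι}
    {B : ι → MvPolynomial σ R} {D : ℕ} (hB : ∀ a ∈ s, (B a).totalDegree ≤ D) (r : ℕ) :
    (∑ A ∈ s.powersetCard r, ∏ a ∈ A, B a).totalDegree ≤ r * D := by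
  refine (totalDegree_finsetSum _ _).trans (Finset.sup_le fun A hA => ?_)
  obtain ⟨hAs, rfl⟩ := mem_powersetCard.1 hA
  calc (∏ a ∈ A, B a).totalDegree ≤ ∑ a ∈ A, (B a).totalDegree := totalDegree_finsetProd _ _
    _ ≤ ∑ _a ∈ A, D := sum_le_sum fun a ha => hB a (hAs ha)
    _ = #A * D := by rw [sum_const, smul_eq_mul]

theorem eval_boole (f : MvPolynomial σ R) (P : σ → Prop) [DecidablePred P] :
    eval (fun i => if P i then 1 else 0) f
      = ∑ s ∈ f.support, if ∀ i ∈ s.support, P i then f.coeff s else 0 := by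
  rw [eval_eq]
  refine sum_congr rfl fun s _ => ?_
  have hpow : ∀ i ∈ s.support, (if P i then (1 : R) else 0) ^ s i = if P i then 1 else 0 :=
    fun i hi => by split_ifs <;> simp_all
  rw [prod_congr rfl hpow, prod_boole, mul_ite, mul_one, mul_zero]

/-- Each monomial `s` of `f` listed `(f.coeff s).val` times, so that at a 0-1 point `f` counts
the copies supported in the support of the point. -/
def monomialCopies {n : ℕ} (f : MvPolynomial σ (ZMod n)) : Finset (Σ _ : σ →₀ ℕ, ℕ) :=
  f.support.sigma fun s => range (f.coeff s).val

theorem natCast_card_filter_monomialCopies {n : ℕ} [NeZero n] (f : MvPolynomial σ (ZMod n))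
    (P : σ → Prop) [DecidablePred P] :
    (#(f.monomialCopies.filter fun a => ∀ i ∈ a.1.support, P i) : ZMod n)
      = eval (fun i => if P i then 1 else 0) f := by
  rw [eval_boole, card_filter, monomialCopies, sum_sigma, Nat.cast_sum]
  refine sum_congr rfl fun s _ => ?_
  split_ifs <;> simp

variable {K : Type*} [Field K] [Fintype K]

noncomputable def nonvanishingIndicator (S : Finset σ) : MvPolynomial σ K :=
  ∏ i ∈ S, X i ^ (Fintype.card K - 1)

theorem eval_nonvanishingIndicator [DecidableEq K] (S : Finset σ) (y : σ → K) :
    eval y (nonvanishingIndicator S) = if ∀ i ∈ S, y i ≠ 0 then 1 else 0 := by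
  rw [nonvanishingIndicator, map_prod, ← prod_boole]
  refine prod_congr rfl fun i _ => ?_
  split_ifs with h
  · simpa using FiniteField.pow_card_sub_one_eq_one _ h
  · simp [not_not.1 h, Nat.sub_ne_zero_of_lt Fintype.one_lt_card]

theorem totalDegree_nonvanishingIndicator_le (S : Finset σ) :
    (nonvanishingIndicator S : MvPolynomial σ K).totalDegree ≤ #S * (Fintype.card K - 1) :=
  totalDegree_prod_X_pow_le S _

variable (K) in
noncomputable def copiesChoose {n : ℕ} (f : MvPolynomial σ (ZMod n)) (r : ℕ) : MvPolynomial σ K :=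
  ∑ A ∈ f.monomialCopies.powersetCard r, ∏ a ∈ A, nonvanishingIndicator a.1.support

theorem eval_copiesChoose [DecidableEq K] {n : ℕ} (f : MvPolynomial σ (ZMod n)) (r : ℕ)
    (y : σ → K) : eval y (copiesChoose K f r)
      = (#(f.monomialCopies.filter fun a => ∀ i ∈ a.1.support, y i ≠ 0)).choose r := by
  simp only [copiesChoose, map_sum, map_prod, eval_nonvanishingIndicator]
  exact sum_powersetCard_prod_boole _ _ _

theorem totalDegree_copiesChoose_le {n : ℕ} (f : MvPolynomial σ (ZMod n)) (r : ℕ) :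
    (copiesChoose K f r).totalDegree ≤ r * ((Fintype.card K - 1) * f.totalDegree) :=
  totalDegree_sum_powersetCard_prod_le (fun a ha => by
    grw [totalDegree_nonvanishingIndicator_le, card_support_le_totalDegree_s7 (mem_sigma.1 ha).1,
      mul_comm]) _

theorem eval_zero_copiesChoose {n : ℕ} {f : MvPolynomial σ (ZMod n)} (hf : f.coeff 0 = 0)
    {r : ℕ} (hr : r ≠ 0) : eval 0 (copiesChoose K f r) = 0 := by
  classical
  rw [eval_copiesChoose, filter_false_of_mem, card_empty, Nat.choose_eq_zero_of_lt (by omega),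
    Nat.cast_zero]
  intro a ha hall
  have ha0 : a.1 ≠ 0 := ne_of_mem_of_not_mem (mem_sigma.1 ha).1 (notMem_support_iff.2 hf)
  obtain ⟨i, hi⟩ := Finsupp.support_nonempty_iff.2 ha0
  exact hall i hi rfl

theorem exists_ne_zero_forall_eval_eq_zero [Fintype σ] {ι : Type*} {s : Finset ι}
    {G : ι → MvPolynomial σ K} (hdeg : ∑ j ∈ s, (G j).totalDegree < Fintype.card σ)
    (h0 : ∀ j ∈ s, eval 0 (G j) = 0) : ∃ y ≠ 0, ∀ j ∈ s, eval y (G j) = 0 := by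
  classical
  have hdvd := char_dvd_card_solutions_of_sum_lt (ringChar K) hdeg
  have hcard : 1 < Fintype.card {x : σ → K // ∀ j ∈ s, eval x (G j) = 0} :=
    (CharP.char_is_prime K (ringChar K)).one_lt.trans_le
      (Nat.le_of_dvd (Fintype.card_pos_iff.2 ⟨⟨0, h0⟩⟩) hdvd)
  obtain ⟨⟨y, hy⟩, hne⟩ := Fintype.exists_ne_of_one_lt_card hcard ⟨0, h0⟩
  exact ⟨y, fun h => hne (Subtype.ext h), hy⟩

end MvPolynomial

/-- Schanuel's theorem: a polynomial over `ℤ/p^kℤ` in `m` variables with zero constant term,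
where `m > (p^k - 1) · deg f`, has a root in `{0,1}^m` different from the zero vector. -/
theorem schanuel (p : ℕ) (hp : p.Prime) (k : ℕ) (hk : 1 ≤ k) (m : ℕ)
    (f : MvPolynomial (Fin m) (ZMod (p ^ k)))
    (hconst : f.coeff 0 = 0)
    (hm : m > (p ^ k - 1) * f.totalDegree) :
    ∃ v : Fin m → ZMod (p ^ k),
      (∀ i, v i = 0 ∨ v i = 1) ∧ v ≠ 0 ∧ MvPolynomial.eval v f = 0 := by
  have := Fact.mk hp
  have : Fact (1 < p ^ k) := ⟨Nat.one_lt_pow (by omega) hp.one_lt⟩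
  let G (j : ℕ) : MvPolynomial (Fin m) (ZMod p) := copiesChoose (ZMod p) f (p ^ j)
  have deg_G : ∑ j ∈ range k, (G j).totalDegree < Fintype.card (Fin m) :=
    calc ∑ j ∈ range k, (G j).totalDegree
        ≤ ∑ j ∈ range k, p ^ j * ((p - 1) * f.totalDegree) :=
          sum_le_sum fun j _ => by
            simpa only [ZMod.card] using totalDegree_copiesChoose_le (K := ZMod p) f _
      _ = (p ^ k - 1) * f.totalDegree := by
          rw [← Nat.geom_sum_mul_sub_one, sum_mul, sum_mul]; simp only [mul_assoc]
      _ < Fintype.card (Fin m) := by simpa using hm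
  obtain ⟨y, hy0, hy⟩ := exists_ne_zero_forall_eval_eq_zero deg_G fun j _ =>
    eval_zero_copiesChoose hconst (pow_pos hp.pos j).ne'
  refine ⟨fun i => if y i ≠ 0 then 1 else 0, fun i => by by_cases h : y i = 0 <;> simp [h], ?_, ?_⟩
  · obtain ⟨i, hi⟩ := Function.ne_iff.1 hy0
    exact Function.ne_iff.2 ⟨i, by simpa using hi⟩
  · rw [← natCast_card_filter_monomialCopies, ZMod.natCast_eq_zero_iff]
    refine Nat.pow_dvd_of_forall_dvd_choose_pow hp fun j hj => ?_
    rw [← ZMod.natCast_eq_zero_iff _ p, ← eval_copiesChoose]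
    exact hy j (mem_range.2 hj)
end

section
/- (Verbal-closedness lemma) Let H be a group, b ∈ H, p prime, k ≥ 1, with b^{p^k} ∈ Z(H). Let S be a finite set and F a subgroup of the group of functions S → ℤ/p^kℤ such that every f ∈ F vanishes at some s ∈ S. Form G = F ⋉ ∏_{s∈S} H_s, where each H_s is an isomorphic copy of H and f ∈ F acts by h_s^f = (h^{b^{f(s)}})_s. Then the diagonal subgroup {∏_{s∈S} h_s : h ∈ H} ≅ H is verbally closed in G. -/
/-- The image of `f : H →* G` is a verbally closed subgroup of `G`: every equation
`w(x, y, …) = h` with `h ∈ H` which is solvable in `G` is solvable in `H`. -/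
def VerballyClosedHom {H G : Type} [Group H] [Group G] (f : H →* G) : Prop :=
  ∀ (w : FreeGroup ℕ) (h : H),
    (∃ φ : ℕ → G, FreeGroup.lift φ w = f h) → ∃ ψ : ℕ → H, FreeGroup.lift ψ w = h

/-- The diagonal homomorphism `H →* (S → H)`. -/
def diagPi (S H : Type) [Group H] : H →* (S → H) where
  toFun h := fun _ => h
  map_one' := rfl
  map_mul' _ _ := rfl

/-!
Let `c` solve `w = h` in `G`. Fix a coordinate `s` and integer lifts `j n` of the values at `s`
of the `F`-components of the `c n`. The assignment `c n ↦ (c n)_s * b ^ (-j n)` respects the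
group law once the integer exponent is carried along, so evaluating `w` on these elements of `H`
gives `h * b ^ (-e)`, where `e` is the exponent-sum pairing of `w` with `j`. It remains to make
`e = 0`. If `a` is the exponent-sum vector of `w` and `q = a / gcd a`, lifts with `a · j = 0`
exist as soon as `q · j ≡ 0 mod p ^ k`, which holds at any coordinate `s` where the element
`∑ q n • f n` of `F` vanishes.
-/

namespace FreeGroup

variable {α : Type*}

noncomputable def exponentSums (w : FreeGroup α) : α →₀ ℤ :=
  Multiplicative.toAdd (lift (fun a => Multiplicative.ofAdd (Finsupp.single a 1)) w)

theorem lift_ofAdd_eq_ofAdd_exponentSums {A : Type*} [AddCommGroup A] (c : α → A)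
    (w : FreeGroup α) :
    lift (fun a => Multiplicative.ofAdd (c a)) w =
      Multiplicative.ofAdd ((exponentSums w).sum fun a z => z • c a) := by
  let θ : (α →₀ ℤ) →+ A := Finsupp.liftAddHom fun a => zmultiplesHom A (c a)
  have : lift (fun a => Multiplicative.ofAdd (c a)) =
      θ.toMultiplicative.comp (lift fun a => Multiplicative.ofAdd (Finsupp.single a 1)) :=
    ext_hom _ _ fun a => by simp [θ]
  rw [this]
  rfl

end FreeGroup

theorem Finsupp.exists_intCast_eq_and_sum_smul_eq_zero {ι : Type*} (a : ι →₀ ℤ) :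
    ∃ q : ι →₀ ℤ, ∀ (N : ℕ) (x : ι → ZMod N), (q.sum fun i z => z • x i) = 0 →
      ∃ j : ι → ℤ, (∀ i, (j i : ZMod N) = x i) ∧ (a.sum fun i z => z • j i) = 0 := by
  classical
  let ψ : (ι → ℤ) →+ ℤ :=
    { toFun := fun t => a.sum fun i z => z * t i
      map_zero' := by simp
      map_add' := fun t u => by simp [mul_add, Finsupp.sum_add] }
  obtain ⟨g, hg⟩ := Int.subgroup_cyclic ψ.range
  have mem_range : ∀ m, m ∈ ψ.range ↔ g ∣ m := fun m => by
    rw [hg, AddSubgroup.mem_closure_singleton]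
    simp only [smul_eq_mul, dvd_iff_exists_eq_mul_left, eq_comm]
  have hdvd : ∀ i, g ∣ a i := fun i => by
    rw [← mem_range]
    refine ⟨Pi.single i 1, ?_⟩
    simp [ψ, Finsupp.sum, Pi.single_apply, eq_comm]
  obtain ⟨u, hu⟩ := (mem_range g).2 dvd_rfl
  let q : ι →₀ ℤ := a.mapRange (· / g) (Int.zero_ediv g)
  have hψ : ∀ t, ψ t = g * q.sum fun i z => z * t i := fun t => by
    rw [Finsupp.sum_mapRange_index fun i => zero_mul (t i), Finsupp.mul_sum]
    show (a.sum fun i z => z * t i) = _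
    refine Finsupp.sum_congr fun i _ => ?_
    rw [← mul_assoc, Int.mul_ediv_cancel' (hdvd i)]
  refine ⟨q, fun N x hx => ?_⟩
  let v : ι → ℤ := fun i => (x i).cast
  have hv : ∀ i, (v i : ZMod N) = x i := fun i => ZMod.intCast_zmod_cast (x i)
  obtain ⟨M, hM⟩ : (N : ℤ) ∣ q.sum fun i z => z * v i := by
    rw [← ZMod.intCast_zmod_eq_zero_iff_dvd, Int.cast_finsupp_sum]
    simpa [hv] using hx
  refine ⟨v - (N * M) • u, fun i => by simp [hv], ?_⟩
  show ψ (v - (N * M) • u) = 0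
  rw [map_sub, map_zsmul, hu, hψ, hM]
  simp only [smul_eq_mul]
  ring

section Untwist

variable {H : Type*} [Group H] (b : H) {N : ℕ} {S : Type*} {F : AddSubgroup (S → ZMod N)}
  {φ : Multiplicative F →* MulAut (S → H)} (s : S)
  (hφ : ∀ (r : Multiplicative F) (d : S → H) (j : ℤ), (j : ZMod N) = (r.toAdd : S → ZMod N) s →
    φ r d s = b ^ (-j) * d s * b ^ j)

def untwistRel : Subgroup ((H × Multiplicative ℤ) × ((S → H) ⋊[φ] Multiplicative F)) where
  carrier := {z | ((z.1.2.toAdd : ℤ) : ZMod N) = (z.2.right.toAdd : S → ZMod N) s ∧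
    z.1.1 = z.2.left s * b ^ (-z.1.2.toAdd)}
  one_mem' := by simp
  mul_mem' := by
    rintro z z' ⟨hm, hz⟩ ⟨hm', hz'⟩
    refine ⟨by simp [hm, hm'], ?_⟩
    simp only [Prod.snd_mul, Prod.fst_mul, SemidirectProduct.mul_left, Pi.mul_apply,
      hφ _ _ _ hm, hz, hz', toAdd_mul, neg_add, zpow_add]
    group
  inv_mem' := by
    rintro z ⟨hm, hz⟩
    refine ⟨by simp [hm], ?_⟩
    simp only [Prod.snd_inv, Prod.fst_inv, SemidirectProduct.inv_left, toAdd_inv, neg_neg, hz]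
    rw [hφ _ _ (-z.1.2.toAdd) (by simp [hm]), Pi.inv_apply]
    group

theorem lift_mem_untwistRel {ι : Type*} (c : ι → (S → H) ⋊[φ] Multiplicative F) (j : ι → ℤ)
    (hj : ∀ i, (j i : ZMod N) = ((c i).right.toAdd : S → ZMod N) s) (w : FreeGroup ι) :
    ((FreeGroup.lift (fun i => (c i).left s * b ^ (-j i)) w,
      FreeGroup.lift (fun i => Multiplicative.ofAdd (j i)) w), FreeGroup.lift c w) ∈
      untwistRel b s hφ := by
  have hprod : FreeGroup.lift
      (fun i => (((c i).left s * b ^ (-j i), Multiplicative.ofAdd (j i)), c i)) =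
      ((FreeGroup.lift fun i => (c i).left s * b ^ (-j i)).prod
        (FreeGroup.lift fun i => Multiplicative.ofAdd (j i))).prod (FreeGroup.lift c) :=
    FreeGroup.ext_hom _ _ fun i => by simp
  refine FreeGroup.range_lift_le ?_ ⟨w, by rw [hprod]; rfl⟩
  rintro _ ⟨i, rfl⟩
  exact ⟨hj i, rfl⟩

end Untwist

theorem verbal_closedness_lemma_general (H : Type) [Group H] (p k : ℕ)
    (b : H)
    (S : Type) (F : AddSubgroup (S → ZMod (p ^ k)))
    (hvanish : ∀ f : F, ∃ s : S, (f : S → ZMod (p ^ k)) s = 0)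
    (φ : Multiplicative F →* MulAut (S → H))
    (hφ : ∀ (f : F) (d : S → H) (s : S) (j : ℤ),
      (j : ZMod (p ^ k)) = (f : S → ZMod (p ^ k)) s →
      φ (Multiplicative.ofAdd f) d s = b ^ (-j) * d s * b ^ j) :
    VerballyClosedHom
      ((SemidirectProduct.inl : (S → H) →* (S → H) ⋊[φ] Multiplicative F).comp (diagPi S H)) := by
  rintro w h ⟨c, hc⟩
  obtain ⟨q, hq⟩ := (FreeGroup.exponentSums w).exists_intCast_eq_and_sum_smul_eq_zero
  obtain ⟨s, hs⟩ := hvanish (q.sum fun n z => z • (c n).right.toAdd)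
  obtain ⟨j, hj, hj_sum⟩ := hq (p ^ k) (fun n => ((c n).right.toAdd : S → ZMod (p ^ k)) s) (by
    rw [← hs]
    exact (map_finsuppSum ((Pi.evalAddMonoidHom (fun _ => ZMod (p ^ k)) s).comp F.subtype) q
      fun n z => z • (c n).right.toAdd).symm)
  obtain ⟨-, hx⟩ := lift_mem_untwistRel b s (fun r d j => hφ r.toAdd d s j) c j hj w
  refine ⟨fun n => (c n).left s * b ^ (-j n), ?_⟩
  dsimp only at hx
  rw [hx, hc, FreeGroup.lift_ofAdd_eq_ofAdd_exponentSums, hj_sum]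
  simp [diagPi]

/-- Verbal-closedness lemma: let `b ∈ H` with `b ^ p ^ k` central, `S` a finite set, `F` a
subgroup of the group of functions `S → ℤ/p^kℤ` each of whose elements vanishes somewhere,
and `G = F ⋉ ∏_{s ∈ S} H_s` where `f ∈ F` acts on the `s`-th copy by conjugation by
`b ^ f(s)`. Then the diagonal copy of `H` is verbally closed in `G`. -/
theorem verbal_closedness_lemma (H : Type) [Group H] (p k : ℕ) (hp : p.Prime) (hk : 1 ≤ k)
    (b : H) (hb : b ^ p ^ k ∈ Subgroup.center H)
    (S : Type) [Fintype S] (F : AddSubgroup (S → ZMod (p ^ k)))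
    (hvanish : ∀ f : F, ∃ s : S, (f : S → ZMod (p ^ k)) s = 0)
    (φ : Multiplicative F →* MulAut (S → H))
    (hφ : ∀ (f : F) (d : S → H) (s : S) (j : ℤ),
      (j : ZMod (p ^ k)) = (f : S → ZMod (p ^ k)) s →
      φ (Multiplicative.ofAdd f) d s = b ^ (-j) * d s * b ^ j) :
    VerballyClosedHom
      ((SemidirectProduct.inl : (S → H) →* (S → H) ⋊[φ] Multiplicative F).comp (diagPi S H)) :=
  verbal_closedness_lemma_general H p k b S F hvanish φ hφ
end

section
/- Any direct factor of a strongly verbally closed group is strongly verbally closed. More precisely, if A × B is strongly verbally closed, then A is strongly verbally closed; this follows from the fact that for any group à containing A, the subgroup A is verbally (respectively, algebraically) closed in à if and only if A × B is verbally (respectively, algebraically) closed in à × B. -/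
/-- The image of `f : H →* G` is an algebraically closed subgroup of `G`: every finite system
of equations with coefficients in `H` (elements of the free product `H ∗ F(x, y, …)`) which is
solvable in `G` is solvable in `H`. -/
def AlgebraicallyClosedHom {H G : Type} [Group H] [Group G] (f : H →* G) : Prop :=
  ∀ (m : ℕ) (eqs : Fin m → Monoid.Coprod H (FreeGroup ℕ)),
    (∃ φ : ℕ → G, ∀ i, Monoid.Coprod.lift f (FreeGroup.lift φ) (eqs i) = 1) →
    ∃ ψ : ℕ → H, ∀ i, Monoid.Coprod.lift (MonoidHom.id H) (FreeGroup.lift ψ) (eqs i) = 1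

/-- A group `H` is strongly verbally closed if it is algebraically closed in every group
containing it as a verbally closed subgroup. -/
def StronglyVerballyClosed (H : Type) [Group H] : Prop :=
  ∀ (G : Type) [Group G] (f : H →* G), Function.Injective f →
    VerballyClosedHom f → AlgebraicallyClosedHom f

theorem FreeGroup.comp_lift {α G K : Type*} [Group G] [Group K] (g : G →* K) (φ : α → G) :
    g.comp (FreeGroup.lift φ) = FreeGroup.lift (g ∘ φ) :=
  FreeGroup.ext_hom _ _ fun _ => by simp

theorem FreeGroup.comp_lift_apply {α G K : Type*} [Group G] [Group K] (g : G →* K)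
    (φ : α → G) (w : FreeGroup α) : g (FreeGroup.lift φ w) = FreeGroup.lift (g ∘ φ) w :=
  DFunLike.congr_fun (FreeGroup.comp_lift g φ) w

theorem FreeGroup.lift_prodMk_apply {α G K : Type*} [Group G] [Group K] (φ : α → G)
    (ψ : α → K) (w : FreeGroup α) :
    FreeGroup.lift (fun a => (φ a, ψ a)) w = (FreeGroup.lift φ w, FreeGroup.lift ψ w) :=
  Prod.ext (FreeGroup.comp_lift_apply (MonoidHom.fst G K) _ w)
    (FreeGroup.comp_lift_apply (MonoidHom.snd G K) _ w)

namespace Monoid.Coprod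

variable {M N M' N' P : Type*} [Monoid M] [Monoid N] [Monoid M'] [Monoid N'] [Monoid P]

theorem comp_lift_apply {P' : Type*} [Monoid P'] (f : P →* P') (g₁ : M →* P) (g₂ : N →* P)
    (x : M ∗ N) : f (lift g₁ g₂ x) = lift (f.comp g₁) (f.comp g₂) x :=
  DFunLike.congr_fun (comp_lift f g₁ g₂) x

theorem lift_map_apply (f : M →* M') (g : N →* N') (h₁ : M' →* P) (h₂ : N' →* P) (x : M ∗ N) :
    lift h₁ h₂ (map f g x) = lift (h₁.comp f) (h₂.comp g) x :=
  DFunLike.congr_fun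
    (hom_ext rfl rfl : (lift h₁ h₂).comp (map f g) = lift (h₁.comp f) (h₂.comp g)) x

theorem lift_freeGroupLift_map {α H G H₀ G₀ : Type*} [Group H] [Group G]
    [Group H₀] [Group G₀] {f : H →* G} {f₀ : H₀ →* G₀} (p : H →* H₀) (q : G →* G₀)
    (hcomm : q.comp f = f₀.comp p) (φ : α → G) (e : H ∗ FreeGroup α) :
    lift f₀ (FreeGroup.lift (q ∘ φ)) (map p (MonoidHom.id _) e)
      = q (lift f (FreeGroup.lift φ) e) := by
  rw [lift_map_apply, comp_lift_apply, FreeGroup.comp_lift, ← hcomm]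
  rfl

end Monoid.Coprod

section

open Monoid.Coprod

variable {H G H' G' : Type} [Group H] [Group G] [Group H'] [Group G']

theorem verballyClosedHom_id : VerballyClosedHom (MonoidHom.id H) :=
  fun _ _ hsol => hsol

theorem algebraicallyClosedHom_id : AlgebraicallyClosedHom (MonoidHom.id H) :=
  fun _ _ hsol => hsol

theorem VerballyClosedHom.prodMap {f : H →* G} {f' : H' →* G'} (hf : VerballyClosedHom f)
    (hf' : VerballyClosedHom f') : VerballyClosedHom (f.prodMap f') := by
  rintro w ⟨h, h'⟩ ⟨φ, hφ⟩
  obtain ⟨ψ, hψ⟩ := hf w h ⟨MonoidHom.fst G G' ∘ φ, by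
    rw [← FreeGroup.comp_lift_apply, hφ]; rfl⟩
  obtain ⟨ψ', hψ'⟩ := hf' w h' ⟨MonoidHom.snd G G' ∘ φ, by
    rw [← FreeGroup.comp_lift_apply, hφ]; rfl⟩
  exact ⟨fun n => (ψ n, ψ' n), by rw [FreeGroup.lift_prodMk_apply, hψ, hψ']⟩

theorem VerballyClosedHom.of_retract {f : H →* G} {f' : H' →* G'} (i : H →* H') (j : G →* G')
    (p : H' →* H) (hcomm : j.comp f = f'.comp i) (hretract : p.comp i = MonoidHom.id H)
    (hf' : VerballyClosedHom f') : VerballyClosedHom f := by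
  rintro w h ⟨φ, hφ⟩
  obtain ⟨ψ, hψ⟩ := hf' w (i h) ⟨j ∘ φ, by
    rw [← FreeGroup.comp_lift_apply, hφ, ← MonoidHom.comp_apply, hcomm]; rfl⟩
  exact ⟨p ∘ ψ, by rw [← FreeGroup.comp_lift_apply, hψ, ← MonoidHom.comp_apply, hretract]; rfl⟩

theorem AlgebraicallyClosedHom.prodMap {f : H →* G} {f' : H' →* G'}
    (hf : AlgebraicallyClosedHom f) (hf' : AlgebraicallyClosedHom f') :
    AlgebraicallyClosedHom (f.prodMap f') := by
  rintro m eqs ⟨φ, hφ⟩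
  have hfst : (MonoidHom.fst G G').comp (f.prodMap f') = f.comp (MonoidHom.fst H H') := rfl
  have hsnd : (MonoidHom.snd G G').comp (f.prodMap f') = f'.comp (MonoidHom.snd H H') := rfl
  obtain ⟨ψ, hψ⟩ := hf m (fun k => map (MonoidHom.fst H H') (MonoidHom.id _) (eqs k))
    ⟨MonoidHom.fst G G' ∘ φ, fun k => by rw [lift_freeGroupLift_map _ _ hfst, hφ k, map_one]⟩
  obtain ⟨ψ', hψ'⟩ := hf' m (fun k => map (MonoidHom.snd H H') (MonoidHom.id _) (eqs k))
    ⟨MonoidHom.snd G G' ∘ φ, fun k => by rw [lift_freeGroupLift_map _ _ hsnd, hφ k, map_one]⟩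
  refine ⟨fun n => (ψ n, ψ' n), fun k => Prod.ext ?_ ?_⟩
  · exact (lift_freeGroupLift_map (MonoidHom.fst H H') (MonoidHom.fst H H')
      (f₀ := MonoidHom.id H) rfl _ (eqs k)).symm.trans (hψ k)
  · exact (lift_freeGroupLift_map (MonoidHom.snd H H') (MonoidHom.snd H H')
      (f₀ := MonoidHom.id H') rfl _ (eqs k)).symm.trans (hψ' k)

theorem AlgebraicallyClosedHom.of_retract {f : H →* G} {f' : H' →* G'} (i : H →* H')
    (j : G →* G') (p : H' →* H) (hcomm : j.comp f = f'.comp i)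
    (hretract : p.comp i = MonoidHom.id H) (hf' : AlgebraicallyClosedHom f') :
    AlgebraicallyClosedHom f := by
  rintro m eqs ⟨φ, hφ⟩
  obtain ⟨ψ, hψ⟩ := hf' m (fun k => map i (MonoidHom.id _) (eqs k))
    ⟨j ∘ φ, fun k => by rw [lift_freeGroupLift_map i j hcomm, hφ k, map_one]⟩
  refine ⟨p ∘ ψ, fun k => ?_⟩
  have hsolved : lift i (FreeGroup.lift ψ) (eqs k) = 1 := by
    rw [← hψ k, lift_map_apply]; rfl
  have hprojected := lift_freeGroupLift_map (f := i) (f₀ := MonoidHom.id H) (MonoidHom.id H) p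
    hretract ψ (eqs k)
  rwa [map_id_id, MonoidHom.id_apply, hsolved, map_one] at hprojected

end

section DirectFactor

variable {A B A' : Type} [Group A] [Group B] [Group A']

theorem verballyClosedHom_iff_prodMap_id (f : A →* A') :
    VerballyClosedHom f ↔ VerballyClosedHom (f.prodMap (MonoidHom.id B)) :=
  ⟨fun hf => hf.prodMap verballyClosedHom_id,
    VerballyClosedHom.of_retract (MonoidHom.inl A B) (MonoidHom.inl A' B) (MonoidHom.fst A B)
      rfl MonoidHom.fst_comp_inl⟩

theorem algebraicallyClosedHom_iff_prodMap_id (f : A →* A') :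
    AlgebraicallyClosedHom f ↔ AlgebraicallyClosedHom (f.prodMap (MonoidHom.id B)) :=
  ⟨fun hf => hf.prodMap algebraicallyClosedHom_id,
    AlgebraicallyClosedHom.of_retract (MonoidHom.inl A B) (MonoidHom.inl A' B) (MonoidHom.fst A B)
      rfl MonoidHom.fst_comp_inl⟩

end DirectFactor

/-- Any direct factor of a strongly verbally closed group is strongly verbally closed;
this follows since, for any overgroup `A'` of `A`, the subgroup `A` is verbally
(resp. algebraically) closed in `A'` iff `A × B` is verbally (resp. algebraically)
closed in `A' × B`. -/
theorem direct_factor_svc (A B : Type) [Group A] [Group B] :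
    (StronglyVerballyClosed (A × B) → StronglyVerballyClosed A) ∧
    ∀ (A' : Type) [Group A'], ∀ f : A →* A', Function.Injective f →
      ((VerballyClosedHom f ↔ VerballyClosedHom (f.prodMap (MonoidHom.id B))) ∧
       (AlgebraicallyClosedHom f ↔ AlgebraicallyClosedHom (f.prodMap (MonoidHom.id B)))) := by
  refine ⟨fun hAB G _ g hg hvc => ?_, fun A' _ f _ =>
    ⟨verballyClosedHom_iff_prodMap_id f, algebraicallyClosedHom_iff_prodMap_id f⟩⟩
  exact (algebraicallyClosedHom_iff_prodMap_id g).2 <|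
    hAB _ _ (hg.prodMap Function.injective_id) ((verballyClosedHom_iff_prodMap_id g).1 hvc)
end

section
/- (Schur's transfer) Let H be a group and F a central subgroup of H of finite index d = |H : F|. Then the map τ : H → F, x ↦ x^d, is a group homomorphism. -/
/-!
Since `F` is central, the transfer `H →* Z(H)` of the inclusion `F ↪ Z(H)` is computed by
`transfer_eq_pow`: an element `g₀⁻¹ gᵏ g₀` landing in `F` is central, hence equals `gᵏ`, so the
transfer is `g ↦ g ^ |H : F|`. Being a transfer, this map is multiplicative.
-/

open Subgroup

open scoped IsMulCommutative

theorem Subgroup.conj_eq_self_of_conj_mem {G : Type*} [Group G] {F : Subgroup G}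
    (hF : F ≤ center G) {g g₀ : G} (h : g₀⁻¹ * g * g₀ ∈ F) : g₀⁻¹ * g * g₀ = g := by
  have hcomm : g₀ * (g₀⁻¹ * g * g₀) = g₀⁻¹ * g * g₀ * g₀ := mem_center_iff.mp (hF h) g₀
  have hcancel : g₀ * (g₀⁻¹ * g * g₀) = g * g₀ := by group
  exact mul_right_cancel (hcomm.symm.trans hcancel)

namespace MonoidHom

variable {G : Type*} [Group G] {F : Subgroup G}

theorem pow_index_mem_of_le_center (hF : F ≤ center G) (g : G) : g ^ F.index ∈ F :=
  transfer_eq_pow_aux g fun _ _ => conj_eq_self_of_conj_mem hF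

theorem transfer_inclusion_eq_pow [F.FiniteIndex] (hF : F ≤ center G) (g : G) :
    transfer (inclusion hF) g = inclusion hF ⟨g ^ F.index, pow_index_mem_of_le_center hF g⟩ :=
  transfer_eq_pow _ g fun _ _ => conj_eq_self_of_conj_mem hF

noncomputable def transferPowOfLeCenter [F.FiniteIndex] (hF : F ≤ center G) : G →* F where
  toFun g := ⟨g ^ F.index, pow_index_mem_of_le_center hF g⟩
  map_one' := Subtype.ext (one_pow F.index)
  map_mul' a b := inclusion_injective hF <| by
    simp only [← transfer_inclusion_eq_pow, map_mul]

theorem transferPowOfLeCenter_apply [F.FiniteIndex] (hF : F ≤ center G) (g : G) :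
    ↑(transferPowOfLeCenter hF g) = g ^ F.index :=
  rfl

end MonoidHom

/-- Schur's transfer: if `F` is a central subgroup of `H` of finite index `d`, then
`x ↦ x^d` maps `H` into `F` and is a group homomorphism. -/
theorem schur_transfer {H : Type*} [Group H] (F : Subgroup H) (hF : F ≤ Subgroup.center H)
    (d : ℕ) (hd : F.index = d) (hd0 : d ≠ 0) :
    (∀ x : H, x ^ d ∈ F) ∧ ∀ x y : H, (x * y) ^ d = x ^ d * y ^ d := by
  subst hd
  have : F.FiniteIndex := ⟨hd0⟩
  refine ⟨MonoidHom.pow_index_mem_of_le_center hF, fun x y => ?_⟩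
  simpa only [MonoidHom.transferPowOfLeCenter_apply, coe_mul] using
    congrArg Subtype.val (map_mul (MonoidHom.transferPowOfLeCenter hF) x y)
end

section
/- (Schur) If the centre Z(G) of a group G has finite index in G, then the commutator subgroup [G,G] is finite. -/
/-!
The commutator `⁅g, h⁆` only depends on the cosets of `g` and `h` modulo the centre, so `G`
has at most `[G : Z(G)]²` commutators. A group with finitely many commutators has a finite
commutator subgroup; Mathlib proves this, also due to Schur, with Schreier's lemma and the
transfer into `Z(G)`.
-/

open scoped commutatorElement

namespace Subgroup

variable {G : Type*} [Group G]

lemma commutatorElement_mul_left_of_mem_center {z : G} (hz : z ∈ center G) (g h : G) :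
    ⁅g * z, h⁆ = ⁅g, h⁆ := by
  have hzh : h * z = z * h := mem_center_iff.mp hz h
  simp only [commutatorElement_def, mul_inv_rev]
  rw [mul_assoc g z h, ← hzh]
  group

lemma commutatorElement_mul_right_of_mem_center {z : G} (hz : z ∈ center G) (g h : G) :
    ⁅g, h * z⁆ = ⁅g, h⁆ := by
  rw [← commutatorElement_inv, commutatorElement_mul_left_of_mem_center hz,
    commutatorElement_inv]

lemma commutatorElement_eq_of_mk_eq_mk {g g' h h' : G}
    (hg : (g : G ⧸ center G) = g') (hh : (h : G ⧸ center G) = h') :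
    ⁅g, h⁆ = ⁅g', h'⁆ := by
  obtain ⟨z, hz, rfl⟩ : ∃ z ∈ center G, g' = g * z :=
    ⟨g⁻¹ * g', QuotientGroup.eq.mp hg, by group⟩
  obtain ⟨w, hw, rfl⟩ : ∃ w ∈ center G, h' = h * w :=
    ⟨h⁻¹ * h', QuotientGroup.eq.mp hh, by group⟩
  rw [commutatorElement_mul_left_of_mem_center hz, commutatorElement_mul_right_of_mem_center hw]

lemma commutatorSet_subset_range_out :
    commutatorSet G ⊆
      Set.range fun q : (G ⧸ center G) × (G ⧸ center G) => ⁅q.1.out, q.2.out⁆ := by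
  rintro _ ⟨g, h, rfl⟩
  exact ⟨(g, h),
    commutatorElement_eq_of_mk_eq_mk (QuotientGroup.out_eq' _) (QuotientGroup.out_eq' _)⟩

instance finite_commutatorSet_of_finiteIndex_center [(center G).FiniteIndex] :
    Finite (commutatorSet G) :=
  ((Set.finite_range _).subset commutatorSet_subset_range_out).to_subtype

end Subgroup

/-- Schur: if the centre of a group has finite index, then the commutator subgroup is finite. -/
theorem schur_commutator_finite {G : Type*} [Group G]
    (h : (Subgroup.center G).FiniteIndex) : Finite (commutator G) :=
  inferInstance
end
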